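/- arXiv:math/0107022 — 2 statements merged into one kernel-verified Lean document; each statement's English description precedes it below -/
import Mathlib

section
/- In the regular graded algebra A^reg(Θ₁,Θ₂) over a field K, an element a = a₀ + a₁Θ₁ + a₂Θ₂ + a₁₂Θ₁Θ₂ + a₂₁Θ₂Θ₁ with a₀ ≠ 0 and D := (a₀ + a₁₂)(a₀ + a₂₁) − a₁a₂ ≠ 0 is invertible, with inverse a⁻¹ = a₀⁻¹ − D⁻¹[a₁Θ₁ + a₂Θ₂ + (a₁₂(1 + a₂₁/a₀) − a₁a₂/a₀)Θ₁Θ₂ + (a₂₁(1 + a₁₂/a₀) − a₁a₂/a₀)Θ₂Θ₁]. -/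
set_option maxHeartbeats 2000000 in
/-- Invertibility criterion and inverse formula in `A^reg(Θ₁,Θ₂)`. -/
theorem stmt9 {K : Type*} [Field K] {A : Type*} [Ring A] [Algebra K A]
    (Θ₁ Θ₂ : A)
    (h1 : Θ₁ * Θ₁ = 0) (h2 : Θ₂ * Θ₂ = 0)
    (h121 : Θ₁ * Θ₂ * Θ₁ = Θ₁) (h212 : Θ₂ * Θ₁ * Θ₂ = Θ₂)
    (a₀ a₁ a₂ a₁₂ a₂₁ : K) (ha₀ : a₀ ≠ 0)
    (D : K) (hD : D = (a₀ + a₁₂) * (a₀ + a₂₁) - a₁ * a₂) (hDne : D ≠ 0) :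
    (a₀ • (1 : A) + a₁ • Θ₁ + a₂ • Θ₂ + a₁₂ • (Θ₁ * Θ₂) + a₂₁ • (Θ₂ * Θ₁)) *
      (a₀⁻¹ • (1 : A) - D⁻¹ • (a₁ • Θ₁ + a₂ • Θ₂
        + (a₁₂ * (1 + a₂₁ / a₀) - a₁ * a₂ / a₀) • (Θ₁ * Θ₂)
        + (a₂₁ * (1 + a₁₂ / a₀) - a₁ * a₂ / a₀) • (Θ₂ * Θ₁))) = 1 ∧
    (a₀⁻¹ • (1 : A) - D⁻¹ • (a₁ • Θ₁ + a₂ • Θ₂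
        + (a₁₂ * (1 + a₂₁ / a₀) - a₁ * a₂ / a₀) • (Θ₁ * Θ₂)
        + (a₂₁ * (1 + a₁₂ / a₀) - a₁ * a₂ / a₀) • (Θ₂ * Θ₁))) *
      (a₀ • (1 : A) + a₁ • Θ₁ + a₂ • Θ₂ + a₁₂ • (Θ₁ * Θ₂) + a₂₁ • (Θ₂ * Θ₁)) = 1 := by
  have l1 : ∀ x : A, Θ₁ * (Θ₁ * x) = 0 := fun x => by rw [← mul_assoc, h1, zero_mul]
  have l2 : ∀ x : A, Θ₂ * (Θ₂ * x) = 0 := fun x => by rw [← mul_assoc, h2, zero_mul]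
  have l3 : Θ₁ * (Θ₂ * Θ₁) = Θ₁ := by rw [← mul_assoc, h121]
  have l4 : Θ₂ * (Θ₁ * Θ₂) = Θ₂ := by rw [← mul_assoc, h212]
  have l5 : ∀ x : A, Θ₁ * (Θ₂ * (Θ₁ * x)) = Θ₁ * x := fun x => by
    rw [← mul_assoc, ← mul_assoc, h121]
  have l6 : ∀ x : A, Θ₂ * (Θ₁ * (Θ₂ * x)) = Θ₂ * x := fun x => by
    rw [← mul_assoc, ← mul_assoc, h212]
  constructor <;>
  · simp only [mul_add, add_mul, mul_sub, sub_mul, smul_mul_assoc, mul_smul_comm,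
      smul_smul, one_mul, mul_one, mul_assoc, l1, l2, l3, l4, l5, l6, h1, h2,
      smul_zero, mul_zero, zero_mul]
    match_scalars <;> field_simp <;> (subst hD; ring)
end

section
/- Over the complex numbers, the element e = 1 + Θ₁ + Θ₂ + ωΘ₁Θ₂ + ω̄Θ₂Θ₁ of A^reg(Θ₁,Θ₂), where ω = −1/2 + i√3/2 is a primitive cube root of unity and ω̄ its conjugate, is idempotent: e·e = e. -/
open Complex in
/-- Over `ℂ`, the element `e = 1 + Θ₁ + Θ₂ + ωΘ₁Θ₂ + ω̄Θ₂Θ₁` of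
`A^reg(Θ₁,Θ₂)`, with `ω = -1/2 + i√3/2` a primitive cube root of unity,
is idempotent. -/
theorem stmt15 {A : Type*} [Ring A] [Algebra ℂ A]
    (Θ₁ Θ₂ : A)
    (h1 : Θ₁ * Θ₁ = 0) (h2 : Θ₂ * Θ₂ = 0)
    (h121 : Θ₁ * Θ₂ * Θ₁ = Θ₁) (h212 : Θ₂ * Θ₁ * Θ₂ = Θ₂)
    (ω : ℂ) (hω : ω = -(1/2) + Complex.I * (Real.sqrt 3 / 2)) :
    ((1 : A) + Θ₁ + Θ₂ + ω • (Θ₁ * Θ₂) + (starRingEnd ℂ) ω • (Θ₂ * Θ₁)) *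
      ((1 : A) + Θ₁ + Θ₂ + ω • (Θ₁ * Θ₂) + (starRingEnd ℂ) ω • (Θ₂ * Θ₁)) =
      (1 : A) + Θ₁ + Θ₂ + ω • (Θ₁ * Θ₂) + (starRingEnd ℂ) ω • (Θ₂ * Θ₁) := by
  have h3 : ((Real.sqrt 3 : ℝ) : ℂ) * ((Real.sqrt 3 : ℝ) : ℂ) = 3 := by
    rw [← Complex.ofReal_mul, Real.mul_self_sqrt (by norm_num)]
    norm_num
  have hc : (starRingEnd ℂ) ω = -1 - ω := by
    rw [hω]
    simp only [map_add, map_neg, map_mul, map_div₀, map_ofNat, map_one,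
      Complex.conj_I, Complex.conj_ofReal]
    ring
  have hsq : ω * ω = -1 - ω := by
    rw [hω]; ring_nf; rw [Complex.I_sq]; ring_nf
    rw [show ((Real.sqrt 3 : ℝ) : ℂ)^2 = 3 by rw [sq, h3]]; ring
  rw [hc]
  have e1212 : Θ₁ * Θ₂ * (Θ₁ * Θ₂) = Θ₁ * Θ₂ := by
    rw [← mul_assoc, h121]
  have e2121 : Θ₂ * Θ₁ * (Θ₂ * Θ₁) = Θ₂ * Θ₁ := by
    rw [← mul_assoc, h212]
  have e1221 : Θ₁ * Θ₂ * (Θ₂ * Θ₁) = 0 := by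
    rw [show Θ₁ * Θ₂ * (Θ₂ * Θ₁) = Θ₁ * (Θ₂ * Θ₂) * Θ₁ by noncomm_ring, h2]
    noncomm_ring
  have e2112 : Θ₂ * Θ₁ * (Θ₁ * Θ₂) = 0 := by
    rw [show Θ₂ * Θ₁ * (Θ₁ * Θ₂) = Θ₂ * (Θ₁ * Θ₁) * Θ₂ by noncomm_ring, h1]
    noncomm_ring
  have e112 : Θ₁ * (Θ₁ * Θ₂) = 0 := by rw [← mul_assoc, h1, zero_mul]
  have e122 : Θ₁ * Θ₂ * Θ₂ = 0 := by rw [mul_assoc, h2, mul_zero]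
  have e221 : Θ₂ * (Θ₂ * Θ₁) = 0 := by rw [← mul_assoc, h2, zero_mul]
  have e211 : Θ₂ * Θ₁ * Θ₁ = 0 := by rw [mul_assoc, h1, mul_zero]
  have e121' : Θ₁ * (Θ₂ * Θ₁) = Θ₁ := by rw [← mul_assoc, h121]
  have e212' : Θ₂ * (Θ₁ * Θ₂) = Θ₂ := by rw [← mul_assoc, h212]
  simp only [mul_add, add_mul, one_mul, mul_one, smul_mul_assoc, mul_smul_comm,
    smul_smul, h1, h2, e112, e122, e221, e211, e121', e212', e1212, e2121, e1221,
    e2112, h121, h212, smul_zero, add_zero, zero_add, mul_zero, zero_mul]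
  match_scalars <;> first | (linear_combination hsq) | (linear_combination -hsq) | ring1
end
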